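/- Let g be a Lorentzian metric on E and l a null vector field such that {l}⊥ is integrable, i.e. for all vector fields W, W' with g_x(l(x),W(x)) = 0 = g_x(l(x),W'(x)) for all x, one has g_x(l(x), [W,W'](x)) = 0 for all x. If X and Y are nil-Killing with respect to l and satisfy g_x(l(x),X(x)) = 0 and g_x(l(x),Y(x)) = 0 for all x, then [X,Y] is nil-Killing with respect to l and g_x(l(x), [X,Y](x)) = 0 for all x. (Hence h_l = {X ∈ {l}⊥ : X nil-Killing with respect to l} is a Lie algebra.) -/

import Mathlib

variable {E : Type*}

/-- The Lie bracket of two vector fields on a normed space: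
`[X,Y](x) = (DY)_x(X x) - (DX)_x(Y x)`. -/
noncomputable def vfLieBracket [NormedAddCommGroup E] [NormedSpace ℝ E]
    (X Y : E → E) : E → E :=
  fun x => fderiv ℝ Y x (X x) - fderiv ℝ X x (Y x)

/-- The Lie derivative of a smooth field of (continuous) bilinear forms `T` along a vector
field `X`: `(L_X T)_x (v, w) = (DT)_x(X x)(v, w) + T_x((DX)_x v, w) + T_x(v, (DX)_x w)`. -/
noncomputable def lieDerivSym [NormedAddCommGroup E] [NormedSpace ℝ E]
    (X : E → E) (T : E → (E →L[ℝ] E →L[ℝ] ℝ)) (x : E) :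
    E →L[ℝ] E →L[ℝ] ℝ :=
  fderiv ℝ T x (X x) + (T x).comp (fderiv ℝ X x)
    + ((ContinuousLinearMap.compL ℝ E E ℝ).flip (fderiv ℝ X x)).comp (T x)

/-- A bilinear form `B` is nilpotent with respect to a vector `v` (relative to the bilinear
form `gx`): `B(v, z) = 0` for all `z`, and `B(w, w') = 0` whenever `w, w' ⊥ v`. -/
def NilpotentWrt [NormedAddCommGroup E] [NormedSpace ℝ E]
    (gx B : E →L[ℝ] E →L[ℝ] ℝ) (v : E) : Prop :=
  (∀ z : E, B v z = 0) ∧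
    ∀ w w' : E, gx v w = 0 → gx v w' = 0 → B w w' = 0

/-- A (continuous) bilinear form on `E` is (nondegenerate of) Lorentzian signature if it is
diagonal `(-1, 1, …, 1)` with respect to some basis. -/
def IsLorentzianForm [NormedAddCommGroup E] [NormedSpace ℝ E]
    (B : E →L[ℝ] E →L[ℝ] ℝ) : Prop :=
  ∃ b : Module.Basis (Fin (Module.finrank ℝ E)) ℝ E,
    ∀ i j, B (b i) (b j) =
      if i = j then (if (i : ℕ) = 0 then (-1 : ℝ) else 1) else 0
set_option linter.unusedSectionVars false

section aux
variable [NormedAddCommGroup E] [NormedSpace ℝ E]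

lemma lieDerivSym_apply (X : E → E) (T : E → (E →L[ℝ] E →L[ℝ] ℝ)) (x v w : E) :
    lieDerivSym X T x v w = fderiv ℝ T x (X x) v w + T x (fderiv ℝ X x v) w
      + T x v (fderiv ℝ X x w) := by
  simp [lieDerivSym, ContinuousLinearMap.add_apply, ContinuousLinearMap.comp_apply,
    ContinuousLinearMap.flip_apply, ContinuousLinearMap.compL_apply]

lemma fderiv_bilin_apply {T : E → E →L[ℝ] E →L[ℝ] ℝ} {V W : E → E} {x : E}
    (hT : DifferentiableAt ℝ T x) (hV : DifferentiableAt ℝ V x)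
    (hW : DifferentiableAt ℝ W x) (u : E) :
    fderiv ℝ (fun y => T y (V y) (W y)) x u
      = fderiv ℝ T x u (V x) (W x) + T x (fderiv ℝ V x u) (W x)
        + T x (V x) (fderiv ℝ W x u) := by
  have h1 := hT.hasFDerivAt.clm_apply hV.hasFDerivAt
  have h2 := h1.clm_apply hW.hasFDerivAt
  rw [h2.fderiv]
  simp [ContinuousLinearMap.add_apply, ContinuousLinearMap.comp_apply,
    ContinuousLinearMap.flip_apply]
  ring

lemma fderiv_apply₂ {T : E → E →L[ℝ] E →L[ℝ] ℝ} {x : E}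
    (hT : DifferentiableAt ℝ T x) (u v w : E) :
    fderiv ℝ (fun y => T y v w) x u = fderiv ℝ T x u v w := by
  have := fderiv_bilin_apply hT (differentiableAt_const v) (differentiableAt_const w) u
  simpa using this

lemma deriv_zero_identity {T : E → E →L[ℝ] E →L[ℝ] ℝ} {V W : E → E} {x : E}
    (hT : DifferentiableAt ℝ T x) (hV : DifferentiableAt ℝ V x)
    (hW : DifferentiableAt ℝ W x) (h0 : ∀ y, T y (V y) (W y) = 0) (u : E) :
    fderiv ℝ T x u (V x) (W x) + T x (fderiv ℝ V x u) (W x)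
      + T x (V x) (fderiv ℝ W x u) = 0 := by
  rw [← fderiv_bilin_apply hT hV hW u]
  have h1 : (fun y => T y (V y) (W y)) = fun _ => (0 : ℝ) := funext h0
  rw [h1, fderiv_fun_const]
  simp

lemma lieDeriv_contDiff {T : E → E →L[ℝ] E →L[ℝ] ℝ} {Y : E → E}
    (hT : ContDiff ℝ (⊤ : ℕ∞) T) (hY : ContDiff ℝ (⊤ : ℕ∞) Y) :
    ContDiff ℝ (⊤ : ℕ∞) (lieDerivSym Y T) := by
  unfold lieDerivSym
  refine ContDiff.add (ContDiff.add ?_ ?_) ?_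
  · exact (hT.fderiv_right (by simp)).clm_apply hY
  · exact hT.clm_comp (hY.fderiv_right (by simp))
  · exact (((ContinuousLinearMap.compL ℝ E E ℝ).flip.contDiff).comp
      (hY.fderiv_right (by simp))).clm_comp hT

lemma lie_comm {T : E → E →L[ℝ] E →L[ℝ] ℝ} {X Y : E → E}
    (hT : ContDiff ℝ (⊤ : ℕ∞) T) (hX : ContDiff ℝ (⊤ : ℕ∞) X) (hY : ContDiff ℝ (⊤ : ℕ∞) Y) (x v w : E) :
    lieDerivSym (vfLieBracket X Y) T x v w
      = lieDerivSym X (lieDerivSym Y T) x v w - lieDerivSym Y (lieDerivSym X T) x v w := by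
  letI := @ContinuousLinearMap.toNormedAddCommGroup ℝ ℝ E (E →L[ℝ] E →L[ℝ] ℝ) _ _ _ _ _ _
    (RingHom.id ℝ) _
  letI := ContinuousLinearMap.toNormedSpace (𝕜 := ℝ) (𝕜₂ := ℝ) (E := E)
    (F := E →L[ℝ] E →L[ℝ] ℝ) (σ₁₂ := RingHom.id ℝ) (𝕜' := ℝ)
  have hTd := hT.differentiable (by simp)
  have hXd := hX.differentiable (by simp)
  have hYd := hY.differentiable (by simp)
  have hT1 := hT.fderiv_right (by exact_mod_cast le_top : ((⊤ : ℕ∞) : WithTop ℕ∞) + 1 ≤ ((⊤ : ℕ∞) : WithTop ℕ∞))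
  have hX1 := hX.fderiv_right (by exact_mod_cast le_top : ((⊤ : ℕ∞) : WithTop ℕ∞) + 1 ≤ ((⊤ : ℕ∞) : WithTop ℕ∞))
  have hY1 := hY.fderiv_right (by exact_mod_cast le_top : ((⊤ : ℕ∞) : WithTop ℕ∞) + 1 ≤ ((⊤ : ℕ∞) : WithTop ℕ∞))
  have hT1d := hT1.differentiable (by simp)
  have hX1d := hX1.differentiable (by simp)
  have hY1d := hY1.differentiable (by simp)
  have hbr : ∀ u : E, fderiv ℝ (vfLieBracket X Y) x u
      = fderiv ℝ (fderiv ℝ Y) x u (X x) + fderiv ℝ Y x (fderiv ℝ X x u)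
        - (fderiv ℝ (fderiv ℝ X) x u (Y x) + fderiv ℝ X x (fderiv ℝ Y x u)) := by
    intro u
    have h1 := (hY1d x).hasFDerivAt.clm_apply (hXd x).hasFDerivAt
    have h2 := (hX1d x).hasFDerivAt.clm_apply (hYd x).hasFDerivAt
    have h3 := h1.fun_sub h2
    rw [show vfLieBracket X Y = fun y => fderiv ℝ Y y (X y) - fderiv ℝ X y (Y y) from rfl,
      h3.fderiv]
    simp [ContinuousLinearMap.add_apply, ContinuousLinearMap.comp_apply,
      ContinuousLinearMap.flip_apply]
    abel
  have hDB : ∀ (Z : E → E), ContDiff ℝ (⊤ : ℕ∞) Z → ∀ u v w : E,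
      fderiv ℝ (lieDerivSym Z T) x u v w
        = fderiv ℝ (fderiv ℝ T) x u (Z x) v w + fderiv ℝ T x (fderiv ℝ Z x u) v w
          + (fderiv ℝ T x u (fderiv ℝ Z x v) w + T x (fderiv ℝ (fderiv ℝ Z) x u v) w)
          + (fderiv ℝ T x u v (fderiv ℝ Z x w) + T x v (fderiv ℝ (fderiv ℝ Z) x u w)) := by
    intro Z hZ u v w
    have hZd := hZ.differentiable (by simp)
    have hZ1 := hZ.fderiv_right (by exact_mod_cast le_top : ((⊤ : ℕ∞) : WithTop ℕ∞) + 1 ≤ ((⊤ : ℕ∞) : WithTop ℕ∞))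
    have hZ1d := hZ1.differentiable (by simp)
    rw [← fderiv_apply₂ ((lieDeriv_contDiff hT hZ).differentiable (by simp) x) u v w]
    have heq : (fun y => lieDerivSym Z T y v w)
        = fun y => fderiv ℝ T y (Z y) v w + T y (fderiv ℝ Z y v) w
            + T y v (fderiv ℝ Z y w) := by
      funext y; rw [lieDerivSym_apply]
    rw [heq]
    have hA := (hT1d x).hasFDerivAt.clm_apply (hZd x).hasFDerivAt
    have hA2 := (hA.clm_apply (hasFDerivAt_const v x)).clm_apply (hasFDerivAt_const w x)
    have hBv := (hZ1d x).hasFDerivAt.clm_apply (hasFDerivAt_const v x)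
    have hB2 := ((hTd x).hasFDerivAt.clm_apply hBv).clm_apply (hasFDerivAt_const w x)
    have hCw := (hZ1d x).hasFDerivAt.clm_apply (hasFDerivAt_const w x)
    have hC2 := ((hTd x).hasFDerivAt.clm_apply (hasFDerivAt_const v x)).clm_apply hCw
    have htot := (hA2.fun_add hB2).fun_add hC2
    rw [htot.fderiv]
    simp [ContinuousLinearMap.add_apply, ContinuousLinearMap.comp_apply,
      ContinuousLinearMap.flip_apply]
    ring
  have hsT := ((hT.contDiffAt (x := x)).isSymmSndFDerivAt (by simp; exact WithTop.coe_le_coe.mpr le_top))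
  have hsX := ((hX.contDiffAt (x := x)).isSymmSndFDerivAt (by simp; exact WithTop.coe_le_coe.mpr le_top))
  have hsY := ((hY.contDiffAt (x := x)).isSymmSndFDerivAt (by simp; exact WithTop.coe_le_coe.mpr le_top))
  simp only [lieDerivSym_apply, hDB X hX, hDB Y hY, hbr]
  rw [show vfLieBracket X Y x = fderiv ℝ Y x (X x) - fderiv ℝ X x (Y x) from rfl]
  simp only [map_add, map_sub, ContinuousLinearMap.add_apply, ContinuousLinearMap.sub_apply]
  rw [hsT (Y x) (X x), hsY v (X x), hsY w (X x), hsX v (Y x), hsX w (Y x)]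
  ring

end aux

section la
variable [NormedAddCommGroup E] [NormedSpace ℝ E] [FiniteDimensional ℝ E]

lemma apply_basis_expand {ι : Type*} [Fintype ι] (b : Module.Basis ι ℝ E)
    (φ : E →L[ℝ] ℝ) (z : E) : φ z = ∑ i, b.repr z i * φ (b i) := by
  conv_lhs => rw [← b.sum_repr z]
  simp [map_sum, map_smul, -Module.Basis.sum_repr]

lemma lor_nondeg {B : E →L[ℝ] E →L[ℝ] ℝ} (hB : IsLorentzianForm B) {v : E}
    (hv : ∀ z, B v z = 0) : v = 0 := by
  obtain ⟨b, hb⟩ := hB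
  have h : ∀ j, b.repr v j = 0 := by
    intro j
    have hv' := hv (b j)
    have hexp : B v (b j) = ∑ i, b.repr v i * B (b i) (b j) := by
      conv_lhs => rw [← b.sum_repr v]
      simp [map_sum, map_smul, ContinuousLinearMap.sum_apply, ContinuousLinearMap.smul_apply,
          -Module.Basis.sum_repr]
    rw [hexp] at hv'
    simp only [hb] at hv'
    rw [Finset.sum_eq_single j] at hv'
    · simp only [if_pos rfl] at hv'
      by_cases hj : (j : ℕ) = 0 <;> simp [hj] at hv' <;> linarith
    · intro i _ hij; simp [hij]
    · simp
  have hrep : b.repr v = 0 := by ext j; simpa using h j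
  have := congrArg b.repr.symm hrep
  simpa using this

lemma functional_propto {φ ψ : E →L[ℝ] ℝ} (hφ : ∃ e, φ e ≠ 0)
    (h : ∀ z, φ z = 0 → ψ z = 0) : ∃ c : ℝ, ∀ z, ψ z = c * φ z := by
  obtain ⟨e, he⟩ := hφ
  refine ⟨ψ e / φ e, fun z => ?_⟩
  have hz : φ (z - (φ z / φ e) • e) = 0 := by
    simp [map_sub, map_smul]
    field_simp
    ring
  have h2 := h _ hz
  simp [map_sub, map_smul] at h2
  have hψ : ψ z = (φ z / φ e) * ψ e := by linarith
  rw [hψ]; field_simp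

lemma perp_perp {g : E →L[ℝ] E →L[ℝ] ℝ} (hg : IsLorentzianForm g)
    {lx u : E} (hlx : lx ≠ 0)
    (h : ∀ w, g lx w = 0 → g u w = 0) : ∃ c : ℝ, u = c • lx := by
  have hφ : ∃ e, g lx e ≠ 0 := by
    by_contra hc
    push_neg at hc
    exact hlx (lor_nondeg hg hc)
  obtain ⟨c, hc⟩ := functional_propto hφ h
  refine ⟨c, ?_⟩
  have hz : ∀ z, g (u - c • lx) z = 0 := by
    intro z
    simp [map_sub, map_smul, ContinuousLinearMap.sub_apply,
      ContinuousLinearMap.smul_apply, hc z]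
  exact sub_eq_zero.mp (lor_nondeg hg hz)

end la


/-- Suppose `{l}⊥` is integrable (the bracket of any two smooth vector fields
orthogonal to `l` is again orthogonal to `l`).  If `X, Y` are nil-Killing with respect to
`l` and orthogonal to `l`, then `[X,Y]` is nil-Killing with respect to `l` and orthogonal
to `l`.  (Hence `h_l = {X ∈ {l}⊥ : X` nil-Killing w.r.t. `l}` is a Lie algebra.) -/
theorem stmt17 [NormedAddCommGroup E] [NormedSpace ℝ E] [FiniteDimensional ℝ E]
    (g : E → (E →L[ℝ] E →L[ℝ] ℝ)) (hg : ContDiff ℝ (⊤ : ℕ∞) g)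
    (hg_symm : ∀ (x v w : E), g x v w = g x w v)
    (hg_lor : ∀ x : E, IsLorentzianForm (g x))
    (l : E → E) (hl : ContDiff ℝ (⊤ : ℕ∞) l)
    (hl_null : ∀ x : E, l x ≠ 0 ∧ g x (l x) (l x) = 0)
    (h_int : ∀ W W' : E → E, ContDiff ℝ (⊤ : ℕ∞) W → ContDiff ℝ (⊤ : ℕ∞) W' →
      (∀ x : E, g x (l x) (W x) = 0) → (∀ x : E, g x (l x) (W' x) = 0) →
      ∀ x : E, g x (l x) (vfLieBracket W W' x) = 0)
    (X Y : E → E) (hX : ContDiff ℝ (⊤ : ℕ∞) X) (hY : ContDiff ℝ (⊤ : ℕ∞) Y)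
    (hX_nil : ∀ x : E, NilpotentWrt (g x) (lieDerivSym X g x) (l x))
    (hY_nil : ∀ x : E, NilpotentWrt (g x) (lieDerivSym Y g x) (l x))
    (hX_perp : ∀ x : E, g x (l x) (X x) = 0)
    (hY_perp : ∀ x : E, g x (l x) (Y x) = 0) :
    (∀ x : E, NilpotentWrt (g x) (lieDerivSym (vfLieBracket X Y) g x) (l x)) ∧
      (∀ x : E, g x (l x) (vfLieBracket X Y x) = 0) := by
  classical
  -- an auxiliary field with g(l, nf) > 0 everywhere
  let b := Module.finBasis ℝ E
  set nf : E → E := fun y => ∑ i, g y (l y) (b i) • b i with hnf_def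
  have hnf_smooth : ContDiff ℝ (⊤ : ℕ∞) nf :=
    ContDiff.sum fun i _ => ((hg.clm_apply hl).clm_apply contDiff_const).smul contDiff_const
  have hnf_pos : ∀ y, 0 < g y (l y) (nf y) := by
    intro y
    have hexp : g y (l y) (nf y) = ∑ i, g y (l y) (b i) * g y (l y) (b i) := by
      simp [hnf_def, map_sum, map_smul, smul_eq_mul]
    rw [hexp]
    have hne : ∃ i, g y (l y) (b i) ≠ 0 := by
      by_contra hc; push_neg at hc
      have hz : ∀ z, g y (l y) z = 0 := by
        intro z; rw [apply_basis_expand b (g y (l y)) z]; simp [hc]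
      exact (hl_null y).1 (lor_nondeg (hg_lor y) hz)
    obtain ⟨i, hi⟩ := hne
    exact Finset.sum_pos' (fun j _ => mul_self_nonneg _)
      ⟨i, Finset.mem_univ i, mul_self_pos.mpr hi⟩
  -- extension of a vector orthogonal to l x₀ to a field orthogonal to l
  have ext_field : ∀ (x₀ w : E), g x₀ (l x₀) w = 0 →
      ∃ W : E → E, ContDiff ℝ (⊤ : ℕ∞) W ∧ (∀ y, g y (l y) (W y) = 0) ∧ W x₀ = w := by
    intro x₀ w hw
    refine ⟨fun y => w - (g y (l y) w / g y (l y) (nf y)) • nf y, ?_, ?_, ?_⟩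
    · exact contDiff_const.sub ((((hg.clm_apply hl).clm_apply contDiff_const).div
        (((hg.clm_apply hl).clm_apply hnf_smooth)) (fun y => (hnf_pos y).ne')).smul hnf_smooth)
    · intro y
      have hne := (hnf_pos y).ne'
      simp only [map_sub, map_smul, smul_eq_mul]
      field_simp
      ring
    · simp [hw]
  -- the bracket [Z, l] is pointwise proportional to l
  have brack_prop : ∀ (Z : E → E), ContDiff ℝ (⊤ : ℕ∞) Z → (∀ x, g x (l x) (Z x) = 0) →
      (∀ x, NilpotentWrt (g x) (lieDerivSym Z g x) (l x)) →
      ∀ x₀, ∃ c : ℝ, vfLieBracket Z l x₀ = c • l x₀ := by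
    intro Z hZ hZperp hZnil x₀
    apply perp_perp (hg_lor x₀) (hl_null x₀).1
    intro w hw
    obtain ⟨W, hWs, hWperp, hWx⟩ := ext_field x₀ w hw
    have hgd := hg.differentiable (by simp)
    have hld := hl.differentiable (by simp)
    have hWd := hWs.differentiable (by simp)
    have h1 := deriv_zero_identity (hgd x₀) (hld x₀) (hWd x₀) (fun y => hWperp y) (Z x₀)
    rw [hWx] at h1
    have h2 := (hZnil x₀).1 w
    rw [lieDerivSym_apply] at h2
    have h3 := h_int Z W hZ hWs hZperp hWperp x₀
    rw [show vfLieBracket Z W x₀ = fderiv ℝ W x₀ (Z x₀) - fderiv ℝ Z x₀ (W x₀) from rfl,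
      hWx] at h3
    rw [show vfLieBracket Z l x₀ = fderiv ℝ l x₀ (Z x₀) - fderiv ℝ Z x₀ (l x₀) from rfl]
    simp only [map_sub, ContinuousLinearMap.sub_apply] at h3 ⊢
    linarith
  -- the Lie derivative of a nilpotent Lie derivative kills (l, z)
  have main1 : ∀ (Z Z' : E → E), ContDiff ℝ (⊤ : ℕ∞) Z → ContDiff ℝ (⊤ : ℕ∞) Z' →
      (∀ x, NilpotentWrt (g x) (lieDerivSym Z' g x) (l x)) →
      (∀ x₀, ∃ c : ℝ, vfLieBracket Z l x₀ = c • l x₀) →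
      ∀ x₀ z, lieDerivSym Z (lieDerivSym Z' g) x₀ (l x₀) z = 0 := by
    intro Z Z' hZ hZ' hnil hbr x₀ z
    have hBd := (lieDeriv_contDiff hg hZ').differentiable (by simp)
    have hld := hl.differentiable (by simp)
    rw [lieDerivSym_apply]
    have h1 := deriv_zero_identity (hBd x₀) (hld x₀) (differentiableAt_const z)
        (fun y => (hnil y).1 z) (Z x₀)
    simp only [fderiv_fun_const, Pi.zero_apply, ContinuousLinearMap.zero_apply, map_zero] at h1
    obtain ⟨c, hc⟩ := hbr x₀
    rw [show vfLieBracket Z l x₀ = fderiv ℝ l x₀ (Z x₀) - fderiv ℝ Z x₀ (l x₀) from rfl] at hc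
    have hcl : fderiv ℝ l x₀ (Z x₀) = c • l x₀ + fderiv ℝ Z x₀ (l x₀) :=
      sub_eq_iff_eq_add.mp hc
    have e : lieDerivSym Z' g x₀ (fderiv ℝ l x₀ (Z x₀)) z
        = lieDerivSym Z' g x₀ (fderiv ℝ Z x₀ (l x₀)) z := by
      rw [hcl]
      simp [map_add, map_smul, ContinuousLinearMap.add_apply,
        ContinuousLinearMap.smul_apply, (hnil x₀).1 z]
    have e2 := (hnil x₀).1 (fderiv ℝ Z x₀ z)
    linarith
  -- the Lie derivative of a nilpotent Lie derivative kills pairs orthogonal to l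
  have main2 : ∀ (Z Z' : E → E), ContDiff ℝ (⊤ : ℕ∞) Z → ContDiff ℝ (⊤ : ℕ∞) Z' →
      (∀ x, g x (l x) (Z x) = 0) →
      (∀ x, NilpotentWrt (g x) (lieDerivSym Z' g x) (l x)) →
      ∀ x₀ v' w', g x₀ (l x₀) v' = 0 → g x₀ (l x₀) w' = 0 →
        lieDerivSym Z (lieDerivSym Z' g) x₀ v' w' = 0 := by
    intro Z Z' hZ hZ' hZperp hnil x₀ v' w' hv' hw'
    obtain ⟨W, hWs, hWperp, hWx⟩ := ext_field x₀ v' hv'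
    obtain ⟨W', hW's, hW'perp, hW'x⟩ := ext_field x₀ w' hw'
    have hBd := (lieDeriv_contDiff hg hZ').differentiable (by simp)
    have hWd := hWs.differentiable (by simp)
    have hW'd := hW's.differentiable (by simp)
    rw [lieDerivSym_apply]
    have h1 := deriv_zero_identity (hBd x₀) (hWd x₀) (hW'd x₀)
        (fun y => (hnil y).2 (W y) (W' y) (hWperp y) (hW'perp y)) (Z x₀)
    rw [hWx, hW'x] at h1
    have hzw := h_int Z W hZ hWs hZperp hWperp x₀
    have hzw' := h_int Z W' hZ hW's hZperp hW'perp x₀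
    rw [show vfLieBracket Z W x₀ = fderiv ℝ W x₀ (Z x₀) - fderiv ℝ Z x₀ (W x₀) from rfl,
      hWx] at hzw
    rw [show vfLieBracket Z W' x₀ = fderiv ℝ W' x₀ (Z x₀) - fderiv ℝ Z x₀ (W' x₀) from rfl,
      hW'x] at hzw'
    have e1 := (hnil x₀).2 _ w' hzw hw'
    have e2 := (hnil x₀).2 v' _ hv' hzw'
    simp only [map_sub, ContinuousLinearMap.sub_apply] at e1 e2
    linarith
  refine ⟨fun x₀ => ⟨fun z => ?_, fun w w' hw hw' => ?_⟩, h_int X Y hX hY hX_perp hY_perp⟩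
  · rw [lie_comm hg hX hY x₀ (l x₀) z,
      main1 X Y hX hY hY_nil (brack_prop X hX hX_perp hX_nil) x₀ z,
      main1 Y X hY hX hX_nil (brack_prop Y hY hY_perp hY_nil) x₀ z]
    ring
  · rw [lie_comm hg hX hY x₀ w w',
      main2 X Y hX hY hX_perp hY_nil x₀ w w' hw hw',
      main2 Y X hY hX hY_perp hX_nil x₀ w w' hw hw']
    ring
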